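/- With φ* as above and αᵢ, D₀, D₁, D₂ as defined, φ* acts on the roots by translation: φ*(αᵢ) = αᵢ + cᵢ·(-K) where (c₀,…,c₆) = (0,0,0,1,0,-1,0), and φ* permutes the components cyclically: φ*(D₀) = D₁, φ*(D₁) = D₂, φ*(D₂) = D₀. -/
import Mathlib


namespace DPA2Translation

def Hf : Fin 10 → ℤ := Pi.single 0 1
def Hg : Fin 10 → ℤ := Pi.single 1 1
def E (k : Fin 8) : Fin 10 → ℤ := Pi.single k.succ.succ 1

/-- The anticanonical class `-K = 2H_f + 2H_g - ∑ᵢ Eᵢ`. -/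
def negK : Fin 10 → ℤ := 2 • Hf + 2 • Hg - ∑ k : Fin 8, E k

def imgHf : Fin 10 → ℤ :=
  6 • Hf + 3 • Hg - 2 • E 0 - 2 • E 1 - 2 • E 2 - 2 • E 3 - E 4 - E 5 - 3 • E 6 - 3 • E 7

def imgHg : Fin 10 → ℤ := 3 • Hf + Hg - E 0 - E 1 - E 2 - E 3 - E 6 - E 7

def imgE : Fin 8 → (Fin 10 → ℤ) :=
  ![2 • Hf + Hg - E 1 - E 2 - E 3 - E 6 - E 7,
    2 • Hf + Hg - E 0 - E 2 - E 3 - E 6 - E 7,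
    2 • Hf + Hg - E 0 - E 1 - E 3 - E 6 - E 7,
    2 • Hf + Hg - E 0 - E 1 - E 2 - E 6 - E 7,
    3 • Hf + Hg - E 0 - E 1 - E 2 - E 3 - E 5 - E 6 - E 7,
    3 • Hf + Hg - E 0 - E 1 - E 2 - E 3 - E 4 - E 6 - E 7,
    Hf - E 7,
    Hf - E 6]

/-- The ℤ-linear map `φ*` of the standard d-P(A₂⁽¹⁾*) dynamic. -/
def φ (x : Fin 10 → ℤ) : Fin 10 → ℤ :=
  x 0 • imgHf + x 1 • imgHg + ∑ k : Fin 8, x k.succ.succ • imgE k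

def D₀ : Fin 10 → ℤ := Hf + Hg - E 0 - E 1 - E 2 - E 3
def D₁ : Fin 10 → ℤ := Hf - E 4 - E 5
def D₂ : Fin 10 → ℤ := Hg - E 6 - E 7

/-- The `E₆⁽¹⁾` simple roots `α₀, …, α₆`. -/
def α : Fin 7 → (Fin 10 → ℤ) :=
  ![E 2 - E 3, E 1 - E 2, E 0 - E 1, Hf - E 0 - E 6, E 6 - E 7, Hg - E 0 - E 4, E 4 - E 5]

/-- The translation vector `(c₀, …, c₆) = (0,0,0,1,0,-1,0)`. -/
def c : Fin 7 → ℤ := ![0, 0, 0, 1, 0, -1, 0]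

/-- `φ*` acts on the roots by the translation `αᵢ ↦ αᵢ + cᵢ·(-K)` with
`(c₀,…,c₆) = (0,0,0,1,0,-1,0)`, and permutes the components of `-K` cyclically. -/
theorem phi_translation_on_symmetry_lattice :
    (∀ i : Fin 7, φ (α i) = α i + c i • negK) ∧
    φ D₀ = D₁ ∧ φ D₁ = D₂ ∧ φ D₂ = D₀ := by
  constructor
  · intro i
    fin_cases i <;> (funext j; fin_cases j <;> rfl)
  refine ⟨?_, ?_, ?_⟩ <;> (funext j; fin_cases j <;> rfl)

end DPA2Translation
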